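/- Let (X, Y) be a pair of random variables with values in 𝒳 × ℝ such that for almost every x the conditional distribution of Y given X = x is absolutely continuous with respect to Lebesgue measure with density bounded by K_p. Fix δ ∈ [0,1] and let l* : 𝒳 → ℝ be measurable with P(Y ≤ l*(X) | X) = δ almost surely. Then for every measurable l₀ : 𝒳 → ℝ with the relevant integrals finite: 0 ≤ E[L(l₀(X), Y)] − E[L(l*(X), Y)] ≤ K_p·E[(l₀(X) − l*(X))²]. -/

import Mathlib

open MeasureTheory ProbabilityTheory Set

/-! Since `L(b, y) - L(a, y) = ∫_a^b (𝟙[y ≤ t] - δ) dt`, integrating in `y` first shows that the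
conditional excess risk of predicting `b` instead of `a` is `∫_a^b (F t - δ) dt`, where `F` is the
conditional CDF of `Y`. At a `δ`-quantile `a` we have `F a = δ`, and a density bound `K` makes
`F` `K`-Lipschitz, so the integrand has the sign of `t - a` and size at most `K |t - a|`. Hence
the conditional excess risk lies in `[0, K (b - a)² / 2]`; integrating over `x` finishes. -/

lemma integral_measureReal_Ici_eq_integral_measureReal_Iic (μ ν : Measure ℝ)
    [IsFiniteMeasure μ] [IsFiniteMeasure ν] :
    ∫ y, μ.real (Ici y) ∂ν = ∫ t, ν.real (Iic t) ∂μ := by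
  have hle : MeasurableSet {p : ℝ × ℝ | p.1 ≤ p.2} :=
    measurableSet_le measurable_fst measurable_snd
  have hIci : Measurable fun y => μ (Ici y) :=
    Antitone.measurable fun _ _ h => measure_mono (Ici_subset_Ici.2 h)
  have hIic : Measurable fun t => ν (Iic t) :=
    Monotone.measurable fun _ _ h => measure_mono (Iic_subset_Iic.2 h)
  simp only [measureReal_def]
  rw [integral_toReal hIci.aemeasurable (.of_forall fun _ => measure_lt_top _ _),
    integral_toReal hIic.aemeasurable (.of_forall fun _ => measure_lt_top _ _)]
  exact congrArg ENNReal.toReal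
    ((Measure.prod_apply (μ := ν) (ν := μ) hle).symm.trans (Measure.prod_apply_symm hle))

lemma measure_le_mul_of_rnDeriv_le {α : Type*} [MeasurableSpace α] {μ ν : Measure α}
    [ν.HaveLebesgueDecomposition μ] (hac : ν ≪ μ) {c : ENNReal}
    (hc : ∀ᵐ x ∂μ, ν.rnDeriv μ x ≤ c) {s : Set α} (hs : MeasurableSet s) :
    ν s ≤ c * μ s := calc
  ν s = ∫⁻ x in s, ν.rnDeriv μ x ∂μ := (Measure.setLIntegral_rnDeriv' hac hs).symm
  _ ≤ ∫⁻ _ in s, c ∂μ := lintegral_mono_ae (ae_restrict_of_ae hc)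
  _ = c * μ s := setLIntegral_const s c

lemma cdf_sub_cdf_le (ν : Measure ℝ) [IsProbabilityMeasure ν] (hac : ν ≪ volume) {K : ℝ}
    (hK : 0 ≤ K) (hbd : ∀ᵐ y, ν.rnDeriv volume y ≤ ENNReal.ofReal K) {s t : ℝ} (hst : s ≤ t) :
    cdf ν t - cdf ν s ≤ K * (t - s) := by
  have h := measure_le_mul_of_rnDeriv_le hac hbd (measurableSet_Ioc (a := s) (b := t))
  rwa [← measure_cdf ν, StieltjesFunction.measure_Ioc, Real.volume_Ioc,
    ← ENNReal.ofReal_mul hK, ENNReal.ofReal_le_ofReal_iff (mul_nonneg hK (sub_nonneg.2 hst))] at h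

section
variable {α β : Type*} [MeasurableSpace α] [MeasurableSpace β] {ρ : Measure α} [SFinite ρ]
  {κ : Kernel α β} {f : α × β → ℝ}

lemma integral_compProd_nonneg_of_ae [IsSFiniteKernel κ] (hf : Integrable f (ρ ⊗ₘ κ))
    (h : ∀ᵐ x ∂ρ, 0 ≤ ∫ y, f (x, y) ∂κ x) : 0 ≤ ∫ q, f q ∂(ρ ⊗ₘ κ) := by
  rw [Measure.integral_compProd hf]
  exact integral_nonneg_of_ae h

lemma integral_compProd_le_of_ae [IsMarkovKernel κ] {g : α → ℝ} (hf : Integrable f (ρ ⊗ₘ κ))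
    (hg : Integrable (fun q => g q.1) (ρ ⊗ₘ κ)) (h : ∀ᵐ x ∂ρ, ∫ y, f (x, y) ∂κ x ≤ g x) :
    ∫ q, f q ∂(ρ ⊗ₘ κ) ≤ ∫ q, g q.1 ∂(ρ ⊗ₘ κ) := by
  rw [Measure.integral_compProd hf, Measure.integral_compProd hg]
  simp only [integral_const, probReal_univ, one_smul]
  exact integral_mono_ae hf.integral_compProd (by simpa using hg.integral_compProd) h
end

def pinballLoss (δ l y : ℝ) : ℝ := (1 - δ) * l - min (l - y) 0

lemma pinballLoss_sub_pinballLoss_of_le (δ : ℝ) {a b : ℝ} (hab : a ≤ b) (y : ℝ) :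
    pinballLoss δ b y - pinballLoss δ a y =
      (volume.restrict (Ioc a b)).real (Ici y) - δ * (b - a) := by
  have hIoi : (Ici y ∩ Ioc a b : Set ℝ) =ᵐ[volume] (Ioi y ∩ Ioc a b : Set ℝ) :=
    ((Ioi_ae_eq_Ici (a := y)).inter (ae_eq_refl (Ioc a b))).symm
  rw [measureReal_restrict_apply measurableSet_Ici, measureReal_congr hIoi, inter_comm,
    Ioc_inter_Ioi, Real.volume_real_Ioc, pinballLoss, pinballLoss]
  grind

lemma integral_pinballLoss_sub_of_le (ν : Measure ℝ) [IsProbabilityMeasure ν] (δ : ℝ) {a b : ℝ}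
    (hab : a ≤ b) :
    ∫ y, (pinballLoss δ b y - pinballLoss δ a y) ∂ν = ∫ t in a..b, (cdf ν t - δ) := by
  have hmeas : Measurable fun y => (volume.restrict (Ioc a b)).real (Ici y) :=
    Antitone.measurable fun _ _ h => measureReal_mono (Ici_subset_Ici.2 h)
  have hint : Integrable (fun y => (volume.restrict (Ioc a b)).real (Ici y)) ν :=
    .of_bound hmeas.aestronglyMeasurable _ (.of_forall fun y => by
      rw [Real.norm_of_nonneg measureReal_nonneg]; exact measureReal_mono (subset_univ _))
  simp_rw [pinballLoss_sub_pinballLoss_of_le δ hab]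
  rw [integral_sub hint (integrable_const _), integral_measureReal_Ici_eq_integral_measureReal_Iic,
    intervalIntegral.integral_sub (monotone_cdf ν).intervalIntegrable intervalIntegrable_const,
    intervalIntegral.integral_of_le hab]
  simp [cdf_eq_real, mul_comm]

lemma integral_pinballLoss_sub (ν : Measure ℝ) [IsProbabilityMeasure ν] (δ a b : ℝ) :
    ∫ y, (pinballLoss δ b y - pinballLoss δ a y) ∂ν = ∫ t in a..b, (cdf ν t - δ) := by
  rcases le_total a b with hab | hba
  · exact integral_pinballLoss_sub_of_le ν δ hab
  · rw [intervalIntegral.integral_symm, ← integral_pinballLoss_sub_of_le ν δ hba, ← integral_neg]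
    simp_rw [neg_sub]

lemma intervalIntegral_sub_apply_left_bounds {F : ℝ → ℝ} (hF : Monotone F) {K : ℝ}
    (hK : ∀ s t, s ≤ t → F t - F s ≤ K * (t - s)) (a b : ℝ) :
    0 ≤ ∫ t in a..b, (F t - F a) ∧ ∫ t in a..b, (F t - F a) ≤ K * (b - a) ^ 2 / 2 := by
  have hFint : ∀ c d, IntervalIntegrable F volume c d := fun _ _ => hF.intervalIntegrable
  rcases le_total a b with hab | hba
  · refine ⟨intervalIntegral.integral_nonneg hab fun t ht => sub_nonneg.2 (hF ht.1), ?_⟩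
    calc ∫ t in a..b, (F t - F a)
        ≤ ∫ t in a..b, K * (t - a) :=
          intervalIntegral.integral_mono_on hab ((hFint a b).sub intervalIntegrable_const)
            (Continuous.intervalIntegrable (by fun_prop) a b) fun t ht => hK a t ht.1
      _ = K * (b - a) ^ 2 / 2 := by simp; ring
  · rw [intervalIntegral.integral_symm, ← intervalIntegral.integral_neg]
    simp_rw [neg_sub]
    refine ⟨intervalIntegral.integral_nonneg hba fun t ht => sub_nonneg.2 (hF ht.2), ?_⟩
    calc ∫ t in b..a, (F a - F t)
        ≤ ∫ t in b..a, K * (a - t) :=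
          intervalIntegral.integral_mono_on hba (intervalIntegrable_const.sub (hFint b a))
            (Continuous.intervalIntegrable (by fun_prop) b a) fun t ht => hK t a ht.2
      _ = K * (b - a) ^ 2 / 2 := by
        rw [intervalIntegral.integral_const_mul,
          intervalIntegral.integral_comp_sub_left (fun x => x)]
        simp; ring

lemma integral_pinballLoss_sub_quantile_bounds (ν : Measure ℝ) [IsProbabilityMeasure ν]
    (hac : ν ≪ volume) {K : ℝ} (hK : 0 ≤ K)
    (hbd : ∀ᵐ y, ν.rnDeriv volume y ≤ ENNReal.ofReal K) {δ : ℝ} (hδ : 0 ≤ δ) {a : ℝ}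
    (ha : ν {y | y ≤ a} = ENNReal.ofReal δ) (b : ℝ) :
    0 ≤ ∫ y, (pinballLoss δ b y - pinballLoss δ a y) ∂ν ∧
      ∫ y, (pinballLoss δ b y - pinballLoss δ a y) ∂ν ≤ K * (b - a) ^ 2 / 2 := by
  have hcdf : cdf ν a = δ := by
    rw [cdf_eq_real, measureReal_def, ← Iic_def, ha, ENNReal.toReal_ofReal hδ]
  rw [integral_pinballLoss_sub, ← hcdf]
  exact intervalIntegral_sub_apply_left_bounds (monotone_cdf ν)
    (fun _ _ hst => cdf_sub_cdf_le ν hac hK hbd hst) a b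

theorem pinball_excess_risk_general {𝒳 : Type*} [MeasurableSpace 𝒳]
    (μ : Measure (𝒳 × ℝ)) [IsProbabilityMeasure μ]
    (κy : Kernel 𝒳 ℝ) [IsMarkovKernel κy]
    (hdecomp : μ = μ.fst ⊗ₘ κy)
    (Kp : ℝ) (hKp : 0 < Kp)
    (hdensity : ∀ᵐ x ∂μ.fst, κy x ≪ (volume : Measure ℝ) ∧
      ∀ᵐ y ∂(volume : Measure ℝ), (κy x).rnDeriv volume y ≤ ENNReal.ofReal Kp)
    (δ : ℝ) (hδ : δ ∈ Set.Icc (0 : ℝ) 1)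
    (lstar : 𝒳 → ℝ)
    (hquantile : ∀ᵐ x ∂μ.fst, κy x {y : ℝ | y ≤ lstar x} = ENNReal.ofReal δ)
    (l₀ : 𝒳 → ℝ)
    (hint1 : Integrable (fun q : 𝒳 × ℝ => (1 - δ) * l₀ q.1 - min (l₀ q.1 - q.2) 0) μ)
    (hint2 : Integrable (fun q : 𝒳 × ℝ =>
      (1 - δ) * lstar q.1 - min (lstar q.1 - q.2) 0) μ)
    (hint3 : Integrable (fun q : 𝒳 × ℝ => (l₀ q.1 - lstar q.1) ^ 2) μ) :
    0 ≤ (∫ q, ((1 - δ) * l₀ q.1 - min (l₀ q.1 - q.2) 0) ∂μ)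
        - (∫ q, ((1 - δ) * lstar q.1 - min (lstar q.1 - q.2) 0) ∂μ) ∧
      (∫ q, ((1 - δ) * l₀ q.1 - min (l₀ q.1 - q.2) 0) ∂μ)
          - (∫ q, ((1 - δ) * lstar q.1 - min (lstar q.1 - q.2) 0) ∂μ)
        ≤ Kp * ∫ q, (l₀ q.1 - lstar q.1) ^ 2 ∂μ := by
  let f : 𝒳 × ℝ → ℝ := fun q => pinballLoss δ (l₀ q.1) q.2 - pinballLoss δ (lstar q.1) q.2
  have hfiber : ∀ᵐ x ∂μ.fst, 0 ≤ ∫ y, f (x, y) ∂κy x ∧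
      ∫ y, f (x, y) ∂κy x ≤ Kp * (l₀ x - lstar x) ^ 2 := by
    filter_upwards [hdensity, hquantile] with x ⟨hac, hbd⟩ hq
    obtain ⟨hnonneg, hle⟩ :=
      integral_pinballLoss_sub_quantile_bounds (κy x) hac hKp.le hbd hδ.1 hq (l₀ x)
    exact ⟨hnonneg, hle.trans (by nlinarith [sq_nonneg (l₀ x - lstar x)])⟩
  have hf : Integrable f μ := hint1.sub hint2
  rw [← integral_sub hint1 hint2, ← integral_const_mul, hdecomp]
  rw [hdecomp] at hf hint3
  exact ⟨integral_compProd_nonneg_of_ae hf (hfiber.mono fun _ h => h.1),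
    integral_compProd_le_of_ae (g := fun x => Kp * (l₀ x - lstar x) ^ 2) hf
      (hint3.const_mul Kp) (hfiber.mono fun _ h => h.2)⟩

/-- Excess-risk bound for the pinball-type potential
`L(l, y) = (1 - δ)·l - min(l - y, 0)` (key step of the no-harm Theorem 4.5): if the
conditional density of `Y` given `X = x` is bounded by `K_p` and `l*` is a conditional
`δ`-quantile (`P(Y ≤ l*(X) | X) = δ` a.s.), then
`0 ≤ E[L(l₀(X),Y)] - E[L(l*(X),Y)] ≤ K_p · E[(l₀(X) - l*(X))²]`. -/
theorem pinball_excess_risk {𝒳 : Type*} [MeasurableSpace 𝒳]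
    (μ : Measure (𝒳 × ℝ)) [IsProbabilityMeasure μ]
    (κy : Kernel 𝒳 ℝ) [IsMarkovKernel κy]
    (hdecomp : μ = μ.fst ⊗ₘ κy)
    (Kp : ℝ) (hKp : 0 < Kp)
    (hdensity : ∀ᵐ x ∂μ.fst, κy x ≪ (volume : Measure ℝ) ∧
      ∀ᵐ y ∂(volume : Measure ℝ), (κy x).rnDeriv volume y ≤ ENNReal.ofReal Kp)
    (δ : ℝ) (hδ : δ ∈ Set.Icc (0 : ℝ) 1)
    (lstar : 𝒳 → ℝ) (hlstar : Measurable lstar)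
    (hquantile : ∀ᵐ x ∂μ.fst, κy x {y : ℝ | y ≤ lstar x} = ENNReal.ofReal δ)
    (l₀ : 𝒳 → ℝ) (hl₀ : Measurable l₀)
    (hint1 : Integrable (fun q : 𝒳 × ℝ => (1 - δ) * l₀ q.1 - min (l₀ q.1 - q.2) 0) μ)
    (hint2 : Integrable (fun q : 𝒳 × ℝ =>
      (1 - δ) * lstar q.1 - min (lstar q.1 - q.2) 0) μ)
    (hint3 : Integrable (fun q : 𝒳 × ℝ => (l₀ q.1 - lstar q.1) ^ 2) μ) :
    0 ≤ (∫ q, ((1 - δ) * l₀ q.1 - min (l₀ q.1 - q.2) 0) ∂μ)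
        - (∫ q, ((1 - δ) * lstar q.1 - min (lstar q.1 - q.2) 0) ∂μ) ∧
      (∫ q, ((1 - δ) * l₀ q.1 - min (l₀ q.1 - q.2) 0) ∂μ)
          - (∫ q, ((1 - δ) * lstar q.1 - min (lstar q.1 - q.2) 0) ∂μ)
        ≤ Kp * ∫ q, (l₀ q.1 - lstar q.1) ^ 2 ∂μ :=
  pinball_excess_risk_general μ κy hdecomp Kp hKp hdensity δ hδ lstar hquantile l₀ hint1 hint2 hint3
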